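/- arXiv:2211.01544 — 9 statements merged into one kernel-verified Lean document; each statement's English description precedes it below -/
import Mathlib

section
/- Let φ be an unbounded integer-valued lscsm on ℕ with φ({x}) = 1 for all x. Then for every integer k ≥ 2 there is a finite set B ⊆ ℕ with φ(B) = k such that φ(C) < k for every proper subset C of B. -/
/-!
The values of `φ` on the initial segments `Iic n` start at `φ {0} = 1`, grow by at most one at a
time (subadditivity and `φ {x} = 1`), and are unbounded (lower semicontinuity and `φ ℕ = ∞`).
Being integers, they hit every `k ≥ 1`. Among the finite sets of measure `k`, one that is minimal
for inclusion is the required `B`: a proper subset has measure `≤ k` by monotonicity and `≠ k` by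
minimality.
-/

open scoped ENNReal

/-- A lower semicontinuous submeasure on ℕ. -/
def IsLSCSM (φ : Set ℕ → ℝ≥0∞) : Prop :=
  φ ∅ = 0 ∧ (∀ A B : Set ℕ, A ⊆ B → φ A ≤ φ B) ∧
    (∀ A B : Set ℕ, φ (A ∪ B) ≤ φ A + φ B) ∧
    (∀ n : ℕ, φ {n} < ⊤) ∧
    (∀ A : Set ℕ, φ A = ⨆ n : ℕ, φ (A ∩ Set.Iic n))

/-- φ is integer-valued (values in ℕ ∪ {∞}) and unbounded (φ(ℕ) = ∞). -/
def IsIntegerValuedUnbounded (φ : Set ℕ → ℝ≥0∞) : Prop :=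
  (∀ A : Set ℕ, φ A = ⊤ ∨ ∃ k : ℕ, φ A = k) ∧ φ Set.univ = ⊤

open Set

theorem Monotone.exists_minimal_eq_apply {α β : Type*} [Preorder α] [WellFoundedLT α]
    [PartialOrder β] {f : α → β} (hf : Monotone f) (a : α) :
    ∃ b, f b = f a ∧ ∀ c < b, f c < f a := by
  obtain ⟨b, hb, hmin⟩ := wellFounded_lt.has_min {x | f x = f a} ⟨a, rfl⟩
  exact ⟨b, hb, fun c hc => (hb ▸ hf hc.le).lt_of_ne fun h => hmin c h hc⟩

theorem ENNReal.exists_eq_natCast_of_le_add_one {f : ℕ → ℝ≥0∞}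
    (hint : ∀ n, f n = ⊤ ∨ ∃ m : ℕ, f n = m) (hstep : ∀ n, f (n + 1) ≤ f n + 1) {k N : ℕ}
    (h0 : f 0 ≤ k) (hN : k ≤ f N) : ∃ n, f n = k := by
  induction N with
  | zero => exact ⟨0, le_antisymm h0 hN⟩
  | succ N ih =>
    by_cases hkN : (k : ℝ≥0∞) ≤ f N
    · exact ih hkN
    push Not at hkN
    obtain ⟨m, hm⟩ := (hint N).resolve_left (hkN.trans (natCast_lt_top k)).ne
    rw [hm, Nat.cast_lt] at hkN
    refine ⟨N + 1, le_antisymm ?_ hN⟩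
    calc f (N + 1) ≤ m + 1 := hm ▸ hstep N
      _ = (m + 1 : ℕ) := by push_cast; rfl
      _ ≤ k := Nat.cast_le.2 hkN

theorem apply_Iic_add_one_le {φ : Set ℕ → ℝ≥0∞} (hsub : ∀ A B, φ (A ∪ B) ≤ φ A + φ B)
    (hsing : ∀ x, φ {x} = 1) (n : ℕ) : φ (Iic (n + 1)) ≤ φ (Iic n) + 1 := by
  have hIic : Iic (n + 1) = Iic n ∪ {n + 1} := by
    rw [union_singleton, ← Order.succ_eq_add_one, Order.Iic_succ]
  rw [hIic, ← hsing (n + 1)]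
  exact hsub _ _

theorem stmt1 (φ : Set ℕ → ℝ≥0∞) (hφ : IsLSCSM φ)
    (hint : IsIntegerValuedUnbounded φ) (hsing : ∀ x : ℕ, φ {x} = 1) :
    ∀ k : ℕ, 2 ≤ k → ∃ B : Finset ℕ, φ ↑B = k ∧ ∀ C : Finset ℕ, C ⊂ B → φ ↑C < k := by
  obtain ⟨-, hmono, hsub, -, hlsc⟩ := hφ
  intro k hk
  have hunbdd : (k : ℝ≥0∞) < ⨆ N, φ (univ ∩ Iic N) := by
    rw [← hlsc, hint.2]
    exact ENNReal.natCast_lt_top k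
  obtain ⟨N, hN⟩ := lt_iSup_iff.1 hunbdd
  have h0 : φ (Iic 0) ≤ k := by
    rw [← bot_eq_zero, Iic_bot, hsing]
    exact_mod_cast (by omega : 1 ≤ k)
  obtain ⟨n, hn⟩ := ENNReal.exists_eq_natCast_of_le_add_one (fun n => hint.1 (Iic n))
    (apply_Iic_add_one_le hsub hsing) h0 (by simpa using hN.le)
  obtain ⟨B, hB, hmin⟩ := Monotone.exists_minimal_eq_apply (f := fun B : Finset ℕ => φ B)
    (fun _ _ h => hmono _ _ (Finset.coe_subset.2 h)) (Finset.Iic n)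
  rw [Finset.coe_Iic, hn] at hB hmin
  exact ⟨B, hB, fun C hC => hmin C hC⟩
end

section
/- Let φ be an integer-valued lscsm on a set X. Suppose there is a finite set A ⊆ X with |A| ≥ 2 such that φ(A∖{x}) < φ(A) for all x ∈ A, and φ(A) < |A|. Then φ is pathological, i.e., there is a set B with sup{μ(B) : μ a measure with μ ≤ φ} < φ(B). -/
open scoped ENNReal

theorem stmt2 {X : Type*} (φ : Set X → ℝ≥0∞)
    (h0 : φ ∅ = 0)
    (hmono : ∀ A B : Set X, A ⊆ B → φ A ≤ φ B)
    (hsub : ∀ A B : Set X, φ (A ∪ B) ≤ φ A + φ B)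
    (hint : ∀ A : Set X, φ A = ⊤ ∨ ∃ k : ℕ, φ A = k)
    (A : Finset X) (hA : 2 ≤ A.card)
    (hdrop : ∀ x ∈ A, φ ((↑A : Set X) \ {x}) < φ ↑A)
    (hsmall : φ ↑A < (A.card : ℝ≥0∞)) :
    ∃ B : Set X,
      (⨆ (m : X → ℝ≥0∞) (_ : ∀ S : Set X, (∑' x : S, m x) ≤ φ S), ∑' x : B, m x) < φ B := by
  classical
  refine ⟨(↑A : Set X), ?_⟩
  obtain ⟨k, hk⟩ : ∃ k : ℕ, φ ↑A = k := by
    rcases hint ↑A with h | h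
    · rw [h] at hsmall; exact absurd hsmall (by simp)
    · exact h
  have hklt : k < A.card := by
    rw [hk] at hsmall; exact_mod_cast hsmall
  obtain ⟨x₀, hx₀⟩ : ∃ x, x ∈ A := Finset.card_pos.mp (by omega)
  have hk1 : 1 ≤ k := by
    by_contra h
    have hk0 : k = 0 := by omega
    have := hdrop x₀ hx₀
    rw [hk, hk0] at this
    simp at this
  set n := A.card with hn
  set c : ℝ≥0∞ := (↑(n * (k - 1)) : ℝ≥0∞) / (↑(n - 1) : ℝ≥0∞) with hc
  have key : ∀ m : X → ℝ≥0∞, (∀ S : Set X, (∑' x : S, m x) ≤ φ S) →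
      (∑' x : (↑A : Set X), m x) ≤ c := by
    intro m hm
    have hsum : (∑' x : (↑A : Set X), m x) = ∑ x ∈ A, m x :=
      Finset.tsum_subtype' A m
    rw [hsum]
    set s : ℝ≥0∞ := ∑ x ∈ A, m x with hs
    have hsle : s ≤ (k : ℝ≥0∞) := by
      rw [← hk, ← hsum]; exact hm ↑A
    have hsne : s ≠ ⊤ := fun h => by simp [h] at hsle
    have hbound : ∀ x ∈ A, s ≤ m x + (↑(k - 1) : ℝ≥0∞) := by
      intro x hx
      have h1 : φ ((↑A : Set X) \ {x}) ≤ (↑(k - 1) : ℝ≥0∞) := by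
        rcases hint ((↑A : Set X) \ {x}) with h | ⟨j, hj⟩
        · exfalso; have := hdrop x hx; rw [h, hk] at this
          exact absurd this (by simp)
        · rw [hj]
          have hjk : (j : ℝ≥0∞) < k := by rw [← hj, ← hk]; exact hdrop x hx
          have : j < k := by exact_mod_cast hjk
          exact_mod_cast Nat.le_sub_one_of_lt this
      have h2 : (∑ y ∈ A.erase x, m y) ≤ (↑(k - 1) : ℝ≥0∞) := by
        calc ∑ y ∈ A.erase x, m y = ∑' y : ((↑A : Set X) \ {x} : Set X), m y := by
              rw [← Finset.coe_erase]; exact (Finset.tsum_subtype' _ m).symm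
          _ ≤ φ _ := hm _
          _ ≤ _ := h1
      calc s = m x + ∑ y ∈ A.erase x, m y := (Finset.add_sum_erase A m hx).symm
        _ ≤ m x + ↑(k - 1) := add_le_add le_rfl h2
    have hsum2 : (n : ℝ≥0∞) * s ≤ s + (n : ℝ≥0∞) * ↑(k - 1) := by
      calc (n : ℝ≥0∞) * s = ∑ _x ∈ A, s := by rw [Finset.sum_const, nsmul_eq_mul]
        _ ≤ ∑ x ∈ A, (m x + ↑(k - 1)) := Finset.sum_le_sum hbound
        _ = s + (n : ℝ≥0∞) * ↑(k - 1) := by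
            rw [Finset.sum_add_distrib, Finset.sum_const, nsmul_eq_mul]
    have hcancel : (↑(n - 1) : ℝ≥0∞) * s ≤ (n : ℝ≥0∞) * ↑(k - 1) := by
      have hne : (n : ℝ≥0∞) * s = s + (↑(n - 1) : ℝ≥0∞) * s := by
        have : (n : ℝ≥0∞) = 1 + (↑(n - 1) : ℝ≥0∞) := by
          have h : n = 1 + (n - 1) := by omega
          calc (n : ℝ≥0∞) = ((1 + (n - 1) : ℕ) : ℝ≥0∞) := by rw [← h]
            _ = 1 + (↑(n - 1) : ℝ≥0∞) := by push_cast; ring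
        rw [this]; ring
      rw [hne] at hsum2
      exact (ENNReal.add_le_add_iff_left hsne).mp hsum2
    rw [hc, ENNReal.le_div_iff_mul_le (by left; exact_mod_cast (by omega : (n - 1 : ℕ) ≠ 0))
      (by left; exact ENNReal.natCast_ne_top _)]
    calc s * (↑(n - 1) : ℝ≥0∞) = (↑(n - 1) : ℝ≥0∞) * s := mul_comm _ _
      _ ≤ (n : ℝ≥0∞) * ↑(k - 1) := hcancel
      _ = (↑(n * (k - 1)) : ℝ≥0∞) := by push_cast; ring
  have hsup : (⨆ (m : X → ℝ≥0∞) (_ : ∀ S : Set X, (∑' x : S, m x) ≤ φ S),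
      ∑' x : (↑A : Set X), m x) ≤ c :=
    iSup_le fun m => iSup_le fun hm => key m hm
  refine lt_of_le_of_lt hsup ?_
  rw [hk, hc, ENNReal.div_lt_iff (Or.inl (by exact_mod_cast (by omega : (n - 1 : ℕ) ≠ 0)))
    (Or.inl (ENNReal.natCast_ne_top _))]
  have hnat : n * (k - 1) < k * (n - 1) := by
    have h1 : n * (k - 1) = n * k - n := by rw [Nat.mul_sub, mul_one]
    have h2 : k * (n - 1) = n * k - k := by rw [Nat.mul_sub, mul_one, mul_comm]
    rw [h1, h2]
    exact Nat.sub_lt_sub_left (by nlinarith) hklt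
  exact_mod_cast hnat
end

section
/- Let φ be an unbounded lscsm on ℕ. Suppose there is M > 0 such that B = {A ⊆ ℕ : φ(A) ≤ M} covers ℕ, and there is a strictly increasing sequence of finite sets (K_n) with ⋃K_n = ℕ, and for each n a subfamily S_n ⊆ P(K_n) ∩ B covering K_n, with δ = inf_n δ(K_n, S_n) > 0. Then every (finitely additive, finitely supported) measure μ dominated by φ satisfies μ(ℕ) ≤ M/δ; in particular the maximal nonpathological minorant φ̂ is bounded by M/δ. -/
/-!
Double counting. Take a finitely supported measure `m ≤ φ` and `n` with `supp m ⊆ K n`.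
Each point `i` lies in at least `δ · |S n|` members of `S n`, and each member `s` of `S n` has
`m(s) ≤ φ(s) ≤ M`, so `δ · |S n| · m(ℕ) ≤ ∑_{s ∈ S n} m(s) ≤ |S n| · M`. An arbitrary measure
dominated by `φ` is the supremum of its finitely supported restrictions.
-/

open scoped ENNReal

open Finset

section CoverFrequency

variable {α : Type*} [DecidableEq α]

/-- `δ(K, S)` is the infimum of `coverFrequency S i` over `i ∈ K`. -/
noncomputable def coverFrequency (S : Finset (Finset α)) (i : α) : ℝ≥0∞ :=
  #{s ∈ S | i ∈ s} / #S

theorem coverFrequency_le_one (S : Finset (Finset α)) (i : α) : coverFrequency S i ≤ 1 :=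
  (ENNReal.div_le_div_right (by exact_mod_cast card_filter_le S _) _).trans
    ENNReal.div_self_le_one

theorem sum_card_filter_mem_mul (S : Finset (Finset α)) (F : Finset α) (m : α → ℝ≥0∞) :
    ∑ i ∈ F, (#{s ∈ S | i ∈ s} : ℝ≥0∞) * m i = ∑ s ∈ S, ∑ i ∈ F with i ∈ s, m i := by
  simp_rw [sum_filter]
  rw [sum_comm]
  refine sum_congr rfl fun i _ => ?_
  rw [← sum_filter, sum_const, nsmul_eq_mul]

theorem mul_sum_le_of_le_coverFrequency {S : Finset (Finset α)} (hS : S.Nonempty)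
    (F : Finset α) (m : α → ℝ≥0∞) {δ M : ℝ≥0∞} (hδ : ∀ i ∈ F, δ ≤ coverFrequency S i)
    (hM : ∀ s ∈ S, ∑ i ∈ s, m i ≤ M) : δ * ∑ i ∈ F, m i ≤ M := by
  have hS₀ : (#S : ℝ≥0∞) ≠ 0 := by simpa using hS.card_pos.ne'
  have hS_top : (#S : ℝ≥0∞) ≠ ⊤ := ENNReal.natCast_ne_top _
  refine (ENNReal.mul_le_mul_iff_right hS₀ hS_top).1 ?_
  calc (#S : ℝ≥0∞) * (δ * ∑ i ∈ F, m i) = ∑ i ∈ F, δ * #S * m i := by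
        rw [mul_sum, mul_sum]; exact sum_congr rfl fun _ _ => by ring
    _ ≤ ∑ i ∈ F, (#{s ∈ S | i ∈ s} : ℝ≥0∞) * m i := by
        gcongr with i hi
        exact (ENNReal.le_div_iff_mul_le (Or.inl hS₀) (Or.inl hS_top)).1 (hδ i hi)
    _ = ∑ s ∈ S, ∑ i ∈ F with i ∈ s, m i := sum_card_filter_mem_mul S F m
    _ ≤ ∑ s ∈ S, ∑ i ∈ s, m i := by
        gcongr with s
        exact fun i hi => (mem_filter.1 hi).2
    _ ≤ ∑ _s ∈ S, M := sum_le_sum hM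
    _ = #S * M := by rw [sum_const, nsmul_eq_mul]

end CoverFrequency

theorem exists_finset_subset_of_monotone {α : Type*} {K : ℕ → Finset α} (hK : Monotone K)
    (hKcov : ∀ a, ∃ n, a ∈ K n) (F : Finset α) : ∃ n, F ⊆ K n := by
  have : ∀ᶠ n in Filter.atTop, ∀ i ∈ F, i ∈ K n :=
    (Filter.eventually_all_finset F).2 fun i _ =>
      let ⟨n, hn⟩ := hKcov i
      Filter.eventually_atTop.2 ⟨n, fun _ hk => hK hk hn⟩
  exact this.exists

theorem tsum_le_div_of_le_coverFrequency {α : Type*} [DecidableEq α] {φ : Set α → ℝ≥0∞}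
    {M δ : ℝ≥0∞} (hδ : δ ≠ 0) {K : ℕ → Finset α} (hK : Monotone K)
    (hKcov : ∀ a, ∃ n, a ∈ K n) {S : ℕ → Finset (Finset α)}
    (hSφ : ∀ n, ∀ s ∈ S n, φ s ≤ M) (hScov : ∀ n, ∀ i ∈ K n, ∃ s ∈ S n, i ∈ s)
    (hδle : ∀ n, ∀ i ∈ K n, δ ≤ coverFrequency (S n) i)
    {m : α → ℝ≥0∞} (hm : (Function.support m).Finite) (hdom : ∀ A : Set α, ∑' a : A, m a ≤ φ A) :
    ∑' a, m a ≤ M / δ := by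
  set F := hm.toFinset
  rw [tsum_eq_sum (s := F) fun a ha => by simpa [F] using ha]
  obtain hF | ⟨i, hi⟩ := F.eq_empty_or_nonempty
  · simp [hF]
  obtain ⟨n, hFK⟩ := exists_finset_subset_of_monotone hK hKcov F
  obtain ⟨s, hs, -⟩ := hScov n i (hFK hi)
  have hδ_top : δ ≠ ⊤ :=
    ne_top_of_le_ne_top ENNReal.one_ne_top ((hδle n i (hFK hi)).trans (coverFrequency_le_one _ _))
  rw [ENNReal.le_div_iff_mul_le (Or.inl hδ) (Or.inl hδ_top), mul_comm]
  refine mul_sum_le_of_le_coverFrequency ⟨s, hs⟩ F m (fun j hj => hδle n j (hFK hj)) ?_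
  intro s hs
  rw [← Finset.tsum_subtype]
  exact (hdom s).trans (hSφ n s hs)

theorem tsum_le_of_forall_finite_support_le {α : Type*} {φ : Set α → ℝ≥0∞} {c : ℝ≥0∞}
    (h : ∀ m : α → ℝ≥0∞, (Function.support m).Finite →
      (∀ A : Set α, ∑' a : A, m a ≤ φ A) → ∑' a, m a ≤ c)
    {m : α → ℝ≥0∞} (hdom : ∀ A : Set α, ∑' a : A, m a ≤ φ A) : ∑' a, m a ≤ c := by
  rw [ENNReal.tsum_eq_iSup_sum]
  refine iSup_le fun F => ?_
  have hF : ∑' a, (F : Set α).indicator m a = ∑ a ∈ F, m a := by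
    rw [← _root_.tsum_subtype]; exact Finset.tsum_subtype F m
  rw [← hF]
  refine h _ (F.finite_toSet.subset Set.support_indicator_subset) fun A => ?_
  exact (ENNReal.tsum_le_tsum fun a : A => Set.indicator_le_self _ m a).trans (hdom A)

theorem stmt6_general (φ : Set ℕ → ℝ≥0∞)
    (M : ℝ≥0∞)
    -- a strictly increasing sequence of finite sets covering ℕ:
    (K : ℕ → Finset ℕ) (hKmono : ∀ n, K n ⊂ K (n + 1)) (hKcov : ∀ m : ℕ, ∃ n, m ∈ K n)
    -- for each n, a subfamily Sn ⊆ P(K n) ∩ B covering K n: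
    (S : ℕ → Finset (Finset ℕ))
    (hSsub : ∀ n, ∀ s ∈ S n, s ⊆ K n ∧ φ ↑s ≤ M)
    (hScov : ∀ n, ∀ i ∈ K n, ∃ s ∈ S n, i ∈ s)
    -- δ is a positive lower bound for the covering numbers δ(K n, S n):
    (δ : ℝ≥0∞) (hδ : 0 < δ)
    (hδle : ∀ n, ∀ i ∈ K n,
      δ ≤ (((S n).filter fun s => i ∈ s).card : ℝ≥0∞) / ((S n).card : ℝ≥0∞)) :
    -- every finitely supported measure dominated by φ has total mass at most M/δ,
    (∀ m : ℕ → ℝ≥0∞, {n : ℕ | m n ≠ 0}.Finite →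
        (∀ A : Set ℕ, (∑' n : A, m n) ≤ φ A) → (∑' n : ℕ, m n) ≤ M / δ) ∧
    -- in particular, φ̂ is bounded by M/δ:
    (∀ A : Set ℕ,
      (⨆ (m : ℕ → ℝ≥0∞) (_ : ∀ B : Set ℕ, (∑' n : B, m n) ≤ φ B), ∑' n : A, m n) ≤ M / δ) := by
  have hK : Monotone K := monotone_nat_of_le_succ fun n => (hKmono n).subset
  have hfinite : ∀ m : ℕ → ℝ≥0∞, {n : ℕ | m n ≠ 0}.Finite →
      (∀ A : Set ℕ, (∑' n : A, m n) ≤ φ A) → (∑' n : ℕ, m n) ≤ M / δ :=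
    fun _ hm hdom => tsum_le_div_of_le_coverFrequency hδ.ne' hK hKcov
      (fun n s hs => (hSsub n s hs).2) hScov hδle hm hdom
  refine ⟨hfinite, fun A => iSup₂_le fun m hdom => ?_⟩
  exact (ENNReal.tsum_comp_le_tsum_of_injective Subtype.val_injective m).trans
    (tsum_le_of_forall_finite_support_le hfinite hdom)

theorem stmt6 (φ : Set ℕ → ℝ≥0∞) (hφ : IsLSCSM φ) (hunb : φ Set.univ = ⊤)
    (M : ℝ≥0∞) (hM : 0 < M)
    -- the family B = {A : φ(A) ≤ M} covers ℕ:
    (hBcov : ∀ n : ℕ, ∃ A : Set ℕ, φ A ≤ M ∧ n ∈ A)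
    -- a strictly increasing sequence of finite sets covering ℕ:
    (K : ℕ → Finset ℕ) (hKmono : ∀ n, K n ⊂ K (n + 1)) (hKcov : ∀ m : ℕ, ∃ n, m ∈ K n)
    -- for each n, a subfamily Sn ⊆ P(K n) ∩ B covering K n:
    (S : ℕ → Finset (Finset ℕ))
    (hSsub : ∀ n, ∀ s ∈ S n, s ⊆ K n ∧ φ ↑s ≤ M)
    (hScov : ∀ n, ∀ i ∈ K n, ∃ s ∈ S n, i ∈ s)
    -- δ is a positive lower bound for the covering numbers δ(K n, S n):
    (δ : ℝ≥0∞) (hδ : 0 < δ)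
    (hδle : ∀ n, ∀ i ∈ K n,
      δ ≤ (((S n).filter fun s => i ∈ s).card : ℝ≥0∞) / ((S n).card : ℝ≥0∞)) :
    -- every finitely supported measure dominated by φ has total mass at most M/δ,
    (∀ m : ℕ → ℝ≥0∞, {n : ℕ | m n ≠ 0}.Finite →
        (∀ A : Set ℕ, (∑' n : A, m n) ≤ φ A) → (∑' n : ℕ, m n) ≤ M / δ) ∧
    -- in particular, φ̂ is bounded by M/δ:
    (∀ A : Set ℕ,
      (⨆ (m : ℕ → ℝ≥0∞) (_ : ∀ B : Set ℕ, (∑' n : B, m n) ≤ φ B), ∑' n : A, m n) ≤ M / δ) :=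
  stmt6_general φ M K hKmono hKcov S hSsub hScov δ hδ hδle
end

section
/- Let ψ_n be the submeasure on K_n = (2n)^n (functions from n to 2n) defined by ψ_n(A) = min{r : there exists b ∈ [2n]^r with A ⊆ ⋃_{i∈b} î}, where î = {f : i ∉ range f}. Then ψ_n(K_n) = n+1. -/
/-! A function on `n` points takes at most `n` values, so it avoids one of any `n + 1` points;
conversely any at most `n` points of `2n` are covered by the range of a single function. -/

open Finset

variable {α β : Type*} [Fintype α]

theorem exists_mem_forall_ne_of_card_lt (f : α → β) {b : Finset β}
    (h : Fintype.card α < #b) : ∃ i ∈ b, ∀ j, f j ≠ i := by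
  classical
  have hcard : #(univ.image f) < #b := (card_image_le.trans_eq card_univ).trans_lt h
  obtain ⟨i, hib, hi⟩ := exists_mem_notMem_of_card_lt_card hcard
  exact ⟨i, hib, fun j hj => hi (mem_image.2 ⟨j, mem_univ j, hj⟩)⟩

theorem exists_subset_range_of_card_le [Nonempty β] (b : Finset β)
    (h : #b ≤ Fintype.card α) : ∃ f : α → β, ↑b ⊆ Set.range f := by
  obtain ⟨e⟩ := Function.Embedding.nonempty_of_card_le (by simpa using h : Fintype.card b ≤ _)
  refine ⟨Function.extend e Subtype.val fun _ => Classical.arbitrary β, fun i hi => ?_⟩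
  exact ⟨e ⟨i, hi⟩, e.injective.extend_apply _ _ _⟩

theorem stmt8 (n : ℕ) (hn : 1 ≤ n) :
    IsLeast {r : ℕ | ∃ b : Finset (Fin (2 * n)), b.card = r ∧
      ∀ f : Fin n → Fin (2 * n), ∃ i ∈ b, ∀ j, f j ≠ i} (n + 1) := by
  constructor
  · obtain ⟨b, -, hb⟩ := exists_subset_card_eq (s := (univ : Finset (Fin (2 * n))))
      (n := n + 1) (by rw [card_univ, Fintype.card_fin]; omega)
    exact ⟨b, hb, fun f => exists_mem_forall_ne_of_card_lt f (by simp [hb])⟩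
  · rintro r ⟨b, rfl, hcover⟩
    by_contra! hlt
    have : Nonempty (Fin (2 * n)) := ⟨⟨0, by omega⟩⟩
    obtain ⟨f, hf⟩ := exists_subset_range_of_card_le (α := Fin n) b
      (by rw [Fintype.card_fin]; omega)
    obtain ⟨i, hib, hi⟩ := hcover f
    obtain ⟨j, hj⟩ := hf hib
    exact hi j hj
end

section
/- Let I and J be ideals on ℕ with J = Fin(φ) for a lscsm φ, and let f : ℕ → ℕ satisfy I = f(J) = {A : f⁻¹(A) ∈ J}. Define φ_f(A) = φ(f⁻¹(A)). Then φ_f is a lscsm, I = Fin(φ_f), and P(φ_f) ≤ P(φ), where P(φ) = sup{φ(A)/φ̂(A) : A finite, φ̂(A) ≠ 0} and φ̂(A) = sup{μ(A) : μ a measure, μ ≤ φ}. -/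
open scoped ENNReal

/-- φ̂, the supremum of all measures dominated by φ. -/
noncomputable def hatSM (φ : Set ℕ → ℝ≥0∞) (A : Set ℕ) : ℝ≥0∞ :=
  ⨆ (m : ℕ → ℝ≥0∞) (_ : ∀ S : Set ℕ, (∑' n : S, m n) ≤ φ S), ∑' n : A, m n

/-- The degree of pathology P(φ) = sup{φ(A)/φ̂(A) : A finite, φ̂(A) ≠ 0}. -/
noncomputable def Pdeg (φ : Set ℕ → ℝ≥0∞) : ℝ≥0∞ :=
  ⨆ (F : Finset ℕ) (_ : hatSM φ ↑F ≠ 0), φ ↑F / hatSM φ ↑F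

noncomputable def sigmaPreimageEquiv (f : ℕ → ℕ) (S : Set ℕ) :
    (Σ n : S, (f ⁻¹' {(n : ℕ)} : Set ℕ)) ≃ (f ⁻¹' S : Set ℕ) where
  toFun p := ⟨(p.2 : ℕ), by
    have h2 := p.2.2
    simp only [Set.mem_preimage, Set.mem_singleton_iff] at h2
    simp only [Set.mem_preimage, h2]
    exact p.1.2⟩
  invFun k := ⟨⟨f k, k.2⟩, ⟨(k : ℕ), rfl⟩⟩
  left_inv p := by
    obtain ⟨⟨n, hn⟩, ⟨k, hk⟩⟩ := p
    simp only [Set.mem_preimage, Set.mem_singleton_iff] at hk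
    subst hk
    rfl
  right_inv k := rfl

lemma tsum_preimage_eq (f : ℕ → ℕ) (m : ℕ → ℝ≥0∞) (S : Set ℕ) :
    ∑' n : S, ∑' k : (f ⁻¹' {(n : ℕ)} : Set ℕ), m k = ∑' k : (f ⁻¹' S : Set ℕ), m k := by
  rw [← (sigmaPreimageEquiv f S).tsum_eq (fun k => m k), ENNReal.tsum_sigma']
  rfl

lemma hatSM_mono (φ : Set ℕ → ℝ≥0∞) {A B : Set ℕ} (h : A ⊆ B) :
    hatSM φ A ≤ hatSM φ B := by
  refine iSup₂_le fun m hm => ?_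
  exact le_trans (ENNReal.tsum_mono_subtype m h) (le_iSup₂ (f := fun m (_ : ∀ S : Set ℕ,
    (∑' n : S, m n) ≤ φ S) => ∑' n : B, m n) m hm)

lemma hatSM_le (φ : Set ℕ → ℝ≥0∞) (A : Set ℕ) : hatSM φ A ≤ φ A :=
  iSup₂_le fun _ hm => hm A

lemma le_hatSM_singleton (φ : Set ℕ → ℝ≥0∞) (hmono : ∀ A B : Set ℕ, A ⊆ B → φ A ≤ φ B)
    (n : ℕ) : φ {n} ≤ hatSM φ {n} := by
  set m : ℕ → ℝ≥0∞ := Set.indicator {n} (fun _ => φ {n}) with hm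
  have hfeas : ∀ S : Set ℕ, (∑' k : S, m k) ≤ φ S := by
    intro S
    rw [tsum_subtype S m]
    by_cases hn : n ∈ S
    · calc ∑' k, S.indicator m k ≤ ∑' k, m k :=
            ENNReal.tsum_le_tsum (fun k => Set.indicator_le_self S m k)
        _ = m n := tsum_eq_single n (fun b hb => by
            simp [hm, Set.indicator_apply, hb])
        _ = φ {n} := by simp [hm]
        _ ≤ φ S := hmono _ _ (Set.singleton_subset_iff.mpr hn)
    · have : ∀ k, S.indicator m k = 0 := by
        intro k
        by_cases hk : k ∈ S
        · simp only [Set.indicator_of_mem hk, hm, Set.indicator_apply]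
          have : k ≠ n := fun h => hn (h ▸ hk)
          simp [this]
        · simp [Set.indicator_of_notMem hk]
      simp [this]
  have : (∑' k : ({n} : Set ℕ), m k) = φ {n} := by
    rw [tsum_subtype ({n} : Set ℕ) m]
    calc ∑' k, (({n} : Set ℕ)).indicator m k = ({n} : Set ℕ).indicator m n :=
        tsum_eq_single n (fun b hb => by simp [Set.indicator_apply, hb])
      _ = φ {n} := by simp [hm]
  calc φ {n} = ∑' k : ({n} : Set ℕ), m k := this.symm
    _ ≤ hatSM φ {n} := le_iSup₂ (f := fun m (_ : ∀ S : Set ℕ,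
        (∑' k : S, m k) ≤ φ S) => ∑' k : ({n} : Set ℕ), m k) m hfeas

/-- Pushforward: hatSM of the preimage is at most hatSM of φ_f. -/
lemma hatSM_preimage_le (φ : Set ℕ → ℝ≥0∞) (f : ℕ → ℕ) (A : Set ℕ) :
    hatSM φ (f ⁻¹' A) ≤ hatSM (fun S => φ (f ⁻¹' S)) A := by
  refine iSup₂_le fun m hm => ?_
  set mf : ℕ → ℝ≥0∞ := fun n => ∑' k : (f ⁻¹' {n} : Set ℕ), m k with hmf
  have key : ∀ S : Set ℕ, (∑' n : S, mf n) = ∑' k : (f ⁻¹' S : Set ℕ), m k := fun S =>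
    tsum_preimage_eq f m S
  have hfeas : ∀ S : Set ℕ, (∑' n : S, mf n) ≤ φ (f ⁻¹' S) := fun S =>
    (key S).le.trans (hm _)
  calc (∑' k : (f ⁻¹' A : Set ℕ), m k) = ∑' n : A, mf n := (key A).symm
    _ ≤ _ := le_iSup₂ (f := fun m (_ : ∀ S : Set ℕ,
        (∑' n : S, m n) ≤ φ (f ⁻¹' S)) => ∑' n : A, m n) mf hfeas

lemma phi_finset_le (φ : Set ℕ → ℝ≥0∞) (h0 : φ ∅ = 0)
    (hsub : ∀ A B : Set ℕ, φ (A ∪ B) ≤ φ A + φ B) (F : Finset ℕ) :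
    φ ↑F ≤ ∑ n ∈ F, φ {n} := by
  classical
  induction F using Finset.cons_induction with
  | empty => simpa using h0.le
  | cons a s ha ih =>
    rw [Finset.cons_eq_insert, Finset.coe_insert, Set.insert_eq,
      Finset.sum_insert ha]
    exact (hsub _ _).trans (add_le_add_right ih _)

theorem stmt9 (φ : Set ℕ → ℝ≥0∞) (hφ : IsLSCSM φ) (f : ℕ → ℕ)
    (I J : Set (Set ℕ)) (hJ : J = {A : Set ℕ | φ A < ⊤})
    (hI : I = {A : Set ℕ | f ⁻¹' A ∈ J})
    (hsing : ∀ n : ℕ, {n} ∈ I) :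
    IsLSCSM (fun A => φ (f ⁻¹' A)) ∧
    I = {A : Set ℕ | (fun A => φ (f ⁻¹' A)) A < ⊤} ∧
    Pdeg (fun A => φ (f ⁻¹' A)) ≤ Pdeg φ := by
  obtain ⟨h0, hmono, hsub, hfin, hlsc⟩ := hφ
  have hsingf : ∀ n : ℕ, φ (f ⁻¹' {n}) < ⊤ := by
    intro n
    have := hsing n
    rw [hI, Set.mem_setOf_eq, hJ, Set.mem_setOf_eq] at this
    exact this
  -- part 1
  have part1 : IsLSCSM (fun A => φ (f ⁻¹' A)) := by
    refine ⟨by simpa using h0, fun A B h => hmono _ _ (Set.preimage_mono h),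
      fun A B => by simpa [Set.preimage_union] using hsub (f ⁻¹' A) (f ⁻¹' B),
      hsingf, fun A => ?_⟩
    show φ (f ⁻¹' A) = ⨆ n : ℕ, φ (f ⁻¹' (A ∩ Set.Iic n))
    apply le_antisymm
    · rw [hlsc (f ⁻¹' A)]
      refine iSup_le fun n => ?_
      -- choose N = max of f on Iic n
      set N := (Finset.Iic n).sup f with hN
      refine le_trans (hmono _ _ ?_) (le_iSup (fun k => φ (f ⁻¹' (A ∩ Set.Iic k))) N)
      intro k hk
      obtain ⟨hk1, hk2⟩ := hk
      refine ⟨hk1, ?_⟩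
      simp only [Set.mem_Iic] at hk2 ⊢
      exact Finset.le_sup (Finset.mem_Iic.mpr hk2)
    · exact iSup_le fun n => hmono _ _ (Set.preimage_mono Set.inter_subset_left)
  refine ⟨part1, by rw [hI, hJ]; rfl, ?_⟩
  -- part 3
  set ψ : Set ℕ → ℝ≥0∞ := fun A => φ (f ⁻¹' A) with hψ
  -- key: for every finite G, φ G ≤ Pdeg φ * hatSM φ G
  have hfinG : ∀ G : Finset ℕ, φ ↑G < ⊤ := by
    intro G
    exact lt_of_le_of_lt (phi_finset_le φ h0 hsub G)
      (ENNReal.sum_lt_top.mpr (fun n _ => hfin n))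
  have key : ∀ G : Finset ℕ, φ ↑G ≤ Pdeg φ * hatSM φ ↑G := by
    intro G
    by_cases hG : hatSM φ ↑G = 0
    · -- then each φ {n} = 0 for n ∈ G, so φ G = 0
      have hz : ∀ n ∈ G, φ {n} = 0 := by
        intro n hn
        have h1 : φ {n} ≤ hatSM φ {n} := le_hatSM_singleton φ hmono n
        have h2 : hatSM φ {n} ≤ hatSM φ ↑G :=
          hatSM_mono φ (by simpa using hn)
        exact le_antisymm (h1.trans (h2.trans_eq hG)) zero_le
      have : φ ↑G ≤ 0 := (phi_finset_le φ h0 hsub G).trans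
        (le_of_eq (Finset.sum_eq_zero hz))
      simpa using this.trans zero_le
    · have hGt : hatSM φ ↑G ≠ ⊤ := fun h =>
        absurd ((hatSM_le φ ↑G).trans_lt (hfinG G)) (by simp [h])
      have : φ ↑G / hatSM φ ↑G ≤ Pdeg φ := by
        exact le_iSup₂ (f := fun (F : Finset ℕ) (_ : hatSM φ (↑F : Set ℕ) ≠ 0) =>
          φ ↑F / hatSM φ ↑F) G hG
      rwa [ENNReal.div_le_iff hG hGt] at this
  have hpreF : ∀ F : Finset ℕ, φ (f ⁻¹' ↑F) < ⊤ := by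
    have hUnion : ∀ F : Finset ℕ, φ (⋃ n ∈ F, f ⁻¹' {n}) < ⊤ := by
      intro F
      classical
      induction F using Finset.cons_induction with
      | empty => simpa using h0.trans_lt ENNReal.zero_lt_top
      | cons a s ha ih =>
        rw [Finset.cons_eq_insert, Finset.set_biUnion_insert]
        exact lt_of_le_of_lt (hsub _ _) (ENNReal.add_lt_top.mpr ⟨hsingf a, ih⟩)
    intro F
    have heq : f ⁻¹' ↑F = ⋃ n ∈ F, f ⁻¹' {n} := by ext k; simp
    rw [heq]; exact hUnion F
  refine iSup₂_le fun F hF => ?_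
  -- hatSM ψ F is finite and nonzero
  have hpre_fin : φ (f ⁻¹' ↑F) < ⊤ := hpreF F
  have hψF_ne_top : hatSM ψ ↑F ≠ ⊤ := fun h =>
    absurd ((hatSM_le ψ ↑F).trans_lt hpre_fin) (by simp [h])
  rw [ENNReal.div_le_iff hF hψF_ne_top]
  -- show ψ F = φ (f⁻¹F) ≤ Pdeg φ * hatSM ψ F using lsc
  have : φ (f ⁻¹' ↑F) = ⨆ n : ℕ, φ ((f ⁻¹' ↑F) ∩ Set.Iic n) := hlsc _
  rw [hψ]
  simp only
  rw [this]
  refine iSup_le fun n => ?_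
  have hfinset : ∃ G : Finset ℕ, ↑G = (f ⁻¹' ↑F) ∩ Set.Iic n := by
    have : ((f ⁻¹' ↑F) ∩ Set.Iic n).Finite :=
      Set.Finite.inter_of_right (Set.finite_Iic n) _
    exact ⟨this.toFinset, this.coe_toFinset⟩
  obtain ⟨G, hG⟩ := hfinset
  rw [← hG]
  calc φ ↑G ≤ Pdeg φ * hatSM φ ↑G := key G
    _ ≤ Pdeg φ * hatSM ψ ↑F := by
        refine mul_le_mul_right ?_ _
        refine le_trans (hatSM_mono φ ?_) (hatSM_preimage_le φ f ↑F)
        rw [hG]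
        exact Set.inter_subset_left
end

section
/- If φ is a lscsm on ℕ with property A (i.e., φ(ℕ) = ∞ and φ({n : φ({n}) > ε}) < ∞ for all ε > 0), then Fin(φ) = {A : φ(A) < ∞} is a tall ideal: every infinite A ⊆ ℕ has an infinite subset B with φ(B) < ∞. -/
open scoped ENNReal

/-- Property A: φ(ℕ) = ∞ and the set of n whose singleton submeasure exceeds ε has
finite submeasure, for every ε > 0. -/
def PropertyA (φ : Set ℕ → ℝ≥0∞) : Prop :=
  φ Set.univ = ⊤ ∧ ∀ ε : ℝ≥0∞, 0 < ε → φ {n : ℕ | ε < φ {n}} < ⊤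

/-- Finite subadditivity from binary subadditivity. -/
lemma finset_subadd (φ : Set ℕ → ℝ≥0∞) (h0 : φ ∅ = 0)
    (hsub : ∀ A B : Set ℕ, φ (A ∪ B) ≤ φ A + φ B) (s : Finset ℕ) :
    φ ↑s ≤ ∑ n ∈ s, φ {n} := by
  induction s using Finset.induction with
  | empty => simp [h0]
  | @insert a s hx ih =>
    have : (↑(insert a s) : Set ℕ) = {a} ∪ ↑s := by
      rw [Finset.coe_insert, Set.insert_eq]
    rw [this, Finset.sum_insert hx]
    exact le_trans (hsub {a} ↑s) (add_le_add le_rfl ih)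

theorem stmt11 (φ : Set ℕ → ℝ≥0∞) (hφ : IsLSCSM φ) (hA : PropertyA φ) :
    ∀ A : Set ℕ, A.Infinite → ∃ B ⊆ A, B.Infinite ∧ φ B < ⊤ := by
  obtain ⟨h0, hmono, hsub, hsing, hlsc⟩ := hφ
  intro A hAinf
  by_cases h : ∃ ε : ℝ≥0∞, 0 < ε ∧ (A ∩ {n | ε < φ {n}}).Infinite
  · obtain ⟨ε, hε, hinf⟩ := h
    refine ⟨A ∩ {n | ε < φ {n}}, Set.inter_subset_left, hinf, ?_⟩
    exact lt_of_le_of_lt (hmono _ _ Set.inter_subset_right) (hA.2 ε hε)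
  · push_neg at h
    set C : ℕ → Set ℕ := fun k => {n ∈ A | φ {n} ≤ (2 : ℝ≥0∞)⁻¹ ^ k} with hC
    have hεpos : ∀ k : ℕ, (0 : ℝ≥0∞) < (2 : ℝ≥0∞)⁻¹ ^ k := fun k => by
      apply ENNReal.pow_pos
      simp
    have hCinf : ∀ k, (C k).Infinite := by
      intro k
      have hfin : (A ∩ {n | (2 : ℝ≥0∞)⁻¹ ^ k < φ {n}}).Finite :=
        h _ (hεpos k)
      have : C k = A \ (A ∩ {n | (2 : ℝ≥0∞)⁻¹ ^ k < φ {n}}) := by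
        ext n
        simp only [hC, Set.mem_setOf_eq, Set.mem_diff, Set.mem_inter_iff, not_and, not_lt]
        tauto
      rw [this]
      exact hAinf.diff hfin
    have hex : ∀ k b : ℕ, ∃ n, n ∈ C k ∧ b < n := by
      intro k b
      obtain ⟨n, hn, hbn⟩ := (hCinf k).exists_gt b
      exact ⟨n, hn, hbn⟩
    choose g hg1 hg2 using hex
    let f : ℕ → ℕ := fun k => Nat.rec (g 0 0) (fun k ih => g (k + 1) ih) k
    have hfmem : ∀ k, f k ∈ C k := by
      intro k
      cases k with
      | zero => exact hg1 0 0
      | succ k => exact hg1 (k + 1) (f k)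
    have hfmono : StrictMono f := strictMono_nat_of_lt_succ fun k => hg2 (k + 1) (f k)
    refine ⟨Set.range f, ?_, Set.infinite_range_of_injective hfmono.injective, ?_⟩
    · rintro _ ⟨k, rfl⟩
      exact (hfmem k).1
    · rw [hlsc (Set.range f)]
      refine lt_of_le_of_lt (iSup_le fun m => ?_) (by norm_num : (2 : ℝ≥0∞) < ⊤)
      have hsubset : Set.range f ∩ Set.Iic m ⊆ ↑((Finset.Iic m).image f) := by
        rintro x ⟨⟨k, rfl⟩, hx⟩
        simp only [Finset.coe_image, Set.mem_image, Finset.coe_Iic, Set.mem_Iic]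
        exact ⟨k, le_trans (hfmono.le_apply) hx, rfl⟩
      refine le_trans (hmono _ _ hsubset) ?_
      refine le_trans (finset_subadd φ h0 hsub _) ?_
      rw [Finset.sum_image (fun a _ b _ hab => hfmono.injective hab)]
      calc ∑ k ∈ Finset.Iic m, φ {f k}
          ≤ ∑ k ∈ Finset.Iic m, (2 : ℝ≥0∞)⁻¹ ^ k :=
            Finset.sum_le_sum fun k _ => (hfmem k).2
        _ ≤ ∑' k : ℕ, (2 : ℝ≥0∞)⁻¹ ^ k := ENNReal.sum_le_tsum _
        _ = (1 - 2⁻¹)⁻¹ := ENNReal.tsum_geometric _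
        _ = 2 := by rw [ENNReal.one_sub_inv_two, inv_inv]
end

section
/- Let (μ_k) be measures on ℕ with μ_k({n}) ≤ 1 for all n,k and φ = sup_k μ_k. For n ∈ ℕ let A^n_i = {k : 2^{-i-1} < μ_k({n}) ≤ 2^{-i}}. Define a coloring c on pairs n < m by c{n,m} = 1 iff for all i ∈ ℕ, A^n_i ∩ (⋃_{j≤i} A^m_j) = ∅. Then every c-homogeneous set of color 1 satisfies φ(H) ≤ 2. -/
open scoped ENNReal

/-- k ∈ A^n_i iff 2^{-i-1} < μ_k({n}) ≤ 2^{-i}. -/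
def inLevel (μ : ℕ → ℕ → ℝ≥0∞) (n i k : ℕ) : Prop :=
  (2 : ℝ≥0∞)⁻¹ ^ (i + 1) < μ k n ∧ μ k n ≤ (2 : ℝ≥0∞)⁻¹ ^ i

theorem stmt14 (μ : ℕ → ℕ → ℝ≥0∞) (hle : ∀ k n, μ k n ≤ 1)
    (H : Set ℕ)
    -- H is homogeneous of color 1: for n < m in H and any i,
    -- A^n_i is disjoint from ⋃_{j ≤ i} A^m_j:
    (hH : ∀ n ∈ H, ∀ m ∈ H, n < m →
      ∀ i k : ℕ, inLevel μ n i k → ¬ ∃ j ≤ i, inLevel μ m j k) :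
    (⨆ k : ℕ, ∑' n : H, μ k n) ≤ 2 := by
  refine iSup_le fun k => ?_
  set f : H → ℝ≥0∞ := fun n => μ k n with hf
  set S : Set H := Function.support f with hS
  -- every point of the support has a level
  have hlev : ∀ n : S, ∃ i, inLevel μ (n : ℕ) i k := by
    rintro ⟨n, hn⟩
    have hne : μ k n ≠ 0 := hn
    obtain ⟨i, hi⟩ := ENNReal.exists_inv_two_pow_lt hne
    have hP : ∃ i, (2 : ℝ≥0∞)⁻¹ ^ (i + 1) < μ k n := by
      exact ⟨i, lt_of_le_of_lt
        (pow_le_pow_of_le_one (by simp) (ENNReal.inv_le_one.2 one_le_two)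
          (Nat.le_succ i)) hi⟩
    classical
    set j := Nat.find hP with hj
    refine ⟨j, Nat.find_spec hP, ?_⟩
    rcases Nat.eq_zero_or_pos j with h0 | hpos
    · rw [h0, pow_zero]; exact hle k n
    · have := Nat.find_min hP (m := j - 1) (by omega)
      push_neg at this
      have : μ k n ≤ (2 : ℝ≥0∞)⁻¹ ^ (j - 1 + 1) := this
      simpa [Nat.sub_add_cancel hpos] using this
  classical
  choose lev hlevspec using hlev
  have hinj : Function.Injective lev := by
    intro a b hab
    by_contra hne
    have hne' : (a : ℕ) ≠ (b : ℕ) := by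
      simpa [Subtype.ext_iff, Subtype.ext_iff (p := fun x => x ∈ H)] using hne
    rcases lt_or_gt_of_ne hne' with h | h
    · exact hH a a.1.2 b b.1.2 h (lev a) k (hlevspec a)
        ⟨lev b, le_of_eq hab.symm, hlevspec b⟩
    · exact hH b b.1.2 a a.1.2 h (lev b) k (hlevspec b)
        ⟨lev a, le_of_eq hab, hlevspec a⟩
  calc ∑' n : H, μ k n = ∑' n : S, f n :=
        (tsum_subtype_eq_of_support_subset (le_refl _)).symm
    _ ≤ ∑' n : S, (2 : ℝ≥0∞)⁻¹ ^ lev n :=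
        ENNReal.tsum_le_tsum fun n => (hlevspec n).2
    _ ≤ ∑' i : ℕ, (2 : ℝ≥0∞)⁻¹ ^ i :=
        ENNReal.tsum_comp_le_tsum_of_injective hinj _
    _ = 2 := by
        rw [ENNReal.tsum_geometric, ENNReal.one_sub_inv_two, inv_inv]
end

section
/- Let (Q_n) be a sequence of families Q_n = {B^n_i : i ∈ ℕ} of pairwise disjoint subsets of ℕ, and suppose there is l ∈ ℕ such that |{i : B^n_i ≠ ∅}| ≤ l for every n. Then there is an infinite set A ⊆ ℕ such that (Q_n)_{n∈A} is eventually disjoint: there is p ∈ ℕ with B^n_i ∩ B^m_i = ∅ for all distinct n,m ∈ A and all i > p. -/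
open Classical in
/-- If the supports escape to infinity in the sense that for every `p` only finitely many
`n ∈ S` have an element `≤ p` in `F n`, and `S` is infinite with all `F n` nonempty on `S`,
then we can find an infinite subset on which the `F n` are pairwise disjoint. -/
lemma stmt15_build (S : Set ℕ) (hS : S.Infinite) (F : ℕ → Finset ℕ)
    (hne : ∀ n ∈ S, (F n).Nonempty)
    (H : ∀ p : ℕ, {n | n ∈ S ∧ ∃ i ∈ F n, i ≤ p}.Finite) :
    ∃ A : Set ℕ, A ⊆ S ∧ A.Infinite ∧
      ∀ n ∈ A, ∀ m ∈ A, n ≠ m → Disjoint (F n) (F m) := by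
  -- step function
  have step : ∀ a : ℕ, ∃ b, b ∈ S ∧ a < b ∧ ∀ i ∈ F b, (F a).sup id < i := by
    intro a
    have hfin : ({n | n ∈ S ∧ ∃ i ∈ F n, i ≤ (F a).sup id} ∪ {n : ℕ | n ≤ a}).Finite :=
      (H _).union (Set.finite_le_nat a)
    obtain ⟨b, hb⟩ := (hS.diff hfin).nonempty
    have hbS : b ∈ S := hb.1
    have hbn := hb.2
    simp only [Set.mem_union, Set.mem_setOf_eq] at hbn
    push_neg at hbn
    exact ⟨b, hbS, hbn.2, fun i hi => hbn.1 hbS i hi⟩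
  choose g hgS hglt hgsup using step
  obtain ⟨a0, ha0⟩ := hS.nonempty
  set f : ℕ → ℕ := fun k => Nat.rec a0 (fun _ a => g a) k with hf
  have hf0 : f 0 = a0 := rfl
  have hfs : ∀ k, f (k + 1) = g (f k) := fun k => rfl
  have hfS : ∀ k, f k ∈ S := by
    intro k
    induction k with
    | zero => exact ha0
    | succ k ih => rw [hfs]; exact hgS _
  have hmono : StrictMono f := strictMono_nat_of_lt_succ (fun k => by rw [hfs]; exact hglt _)
  -- key: for j < k, everything in F (f k) exceeds sup of F (f j)
  have key : ∀ k, ∀ j < k, ∀ i ∈ F (f k), (F (f j)).sup id < i := by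
    intro k
    induction k with
    | zero => intro j hj; omega
    | succ k ih =>
      intro j hj i hi
      rw [hfs] at hi
      have h1 : (F (f k)).sup id < i := hgsup _ i hi
      rcases Nat.lt_succ_iff_lt_or_eq.mp hj with hj' | rfl
      · obtain ⟨m, hm⟩ := hne (f k) (hfS k)
        have h2 : (F (f j)).sup id < m := ih j hj' m hm
        have h3 : m ≤ (F (f k)).sup id := Finset.le_sup (f := id) hm
        omega
      · exact h1
  refine ⟨Set.range f, by rintro _ ⟨k, rfl⟩; exact hfS k, Set.infinite_range_of_injective hmono.injective, ?_⟩
  rintro _ ⟨j, rfl⟩ _ ⟨k, rfl⟩ hne'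
  have hjk : j ≠ k := fun h => hne' (by rw [h])
  have main : ∀ j k : ℕ, j < k → Disjoint (F (f j)) (F (f k)) := by
    intro j k hlt
    rw [Finset.disjoint_left]
    intro i hij hik
    have := key k j hlt i hik
    have : i ≤ (F (f j)).sup id := Finset.le_sup (f := id) hij
    omega
  rcases lt_or_gt_of_ne hjk with h | h
  · exact main j k h
  · exact (main k j h).symm

open Classical in
lemma stmt15_aux (l : ℕ) : ∀ (T : ℕ → Finset ℕ), (∀ n, (T n).card ≤ l) →
    ∀ S : Set ℕ, S.Infinite → ∃ A : Set ℕ, A ⊆ S ∧ A.Infinite ∧ ∃ p : ℕ,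
      ∀ n ∈ A, ∀ m ∈ A, n ≠ m → ∀ i, p < i → i ∉ T n ∨ i ∉ T m := by
  induction l with
  | zero =>
    intro T hT S hS
    refine ⟨S, le_refl _, hS, 0, fun n _ m _ _ i _ => ?_⟩
    left
    simp [Finset.card_eq_zero.mp (Nat.le_zero.mp (hT n))]
  | succ l ih =>
    intro T hT S hS
    by_cases h1 : {n | n ∈ S ∧ T n = ∅}.Infinite
    · refine ⟨_, fun n hn => hn.1, h1, 0, fun n hn m hm _ i _ => ?_⟩
      left; simp [hn.2]
    · have hS1 : {n | n ∈ S ∧ T n ≠ ∅}.Infinite := by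
        have : S ⊆ {n | n ∈ S ∧ T n = ∅} ∪ {n | n ∈ S ∧ T n ≠ ∅} := by
          intro n hn; by_cases h : T n = ∅
          · exact Or.inl ⟨hn, h⟩
          · exact Or.inr ⟨hn, h⟩
        rcases Set.infinite_union.mp (hS.mono this) with h | h
        · exact absurd h h1
        · exact h
      set S1 := {n | n ∈ S ∧ T n ≠ ∅} with hS1def
      by_cases h2 : ∃ p : ℕ, {n | n ∈ S1 ∧ ∃ i ∈ T n, i ≤ p}.Infinite
      · obtain ⟨p0, hp0⟩ := h2
        set T' : ℕ → Finset ℕ := fun n => (T n).filter (p0 < ·) with hT'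
        have hT'card : ∀ n ∈ {n | n ∈ S1 ∧ ∃ i ∈ T n, i ≤ p0}, (T' n).card ≤ l := by
          intro n hn
          obtain ⟨_, i, hiT, hip⟩ := hn
          have hsub : T' n ⊆ T n := Finset.filter_subset _ _
          have hi' : i ∉ T' n := by simp [hT', hiT]; omega
          have : (T' n).card < (T n).card :=
            Finset.card_lt_card (Finset.ssubset_iff_of_subset hsub |>.mpr ⟨i, hiT, hi'⟩)
          have := hT n
          omega
        -- need a globally defined T'' with card ≤ l
        set T'' : ℕ → Finset ℕ := fun n =>
          if n ∈ {n | n ∈ S1 ∧ ∃ i ∈ T n, i ≤ p0} then T' n else ∅ with hT''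
        have hT''card : ∀ n, (T'' n).card ≤ l := by
          intro n
          by_cases h : n ∈ {n | n ∈ S1 ∧ ∃ i ∈ T n, i ≤ p0}
          · simp only [hT'']
            rw [if_pos h]
            exact hT'card n h
          · simp only [hT'']
            rw [if_neg h]
            simp
        obtain ⟨A, hAsub, hAinf, p', hp'⟩ := ih T'' hT''card _ hp0
        refine ⟨A, fun n hn => (hAsub hn).1.1, hAinf, max p0 p', fun n hn m hm hnm i hi => ?_⟩
        rcases hp' n hn m hm hnm i (lt_of_le_of_lt (le_max_right _ _) hi) with h | h
        · left; intro hiT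
          apply h
          simp only [hT'']
          rw [if_pos (hAsub hn)]
          simp only [hT', Finset.mem_filter]
          exact ⟨hiT, lt_of_le_of_lt (le_max_left p0 p') hi⟩
        · right; intro hiT
          apply h
          simp only [hT'']
          rw [if_pos (hAsub hm)]
          simp only [hT', Finset.mem_filter]
          exact ⟨hiT, lt_of_le_of_lt (le_max_left p0 p') hi⟩
      · push_neg at h2
        have hfin : ∀ p : ℕ, {n | n ∈ S1 ∧ ∃ i ∈ T n, i ≤ p}.Finite := by
          intro p
          exact h2 p
        obtain ⟨A, hAsub, hAinf, hAdisj⟩ := stmt15_build S1 hS1 T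
          (fun n hn => Finset.nonempty_iff_ne_empty.mpr hn.2) hfin
        refine ⟨A, fun n hn => (hAsub hn).1, hAinf, 0, fun n hn m hm hnm i _ => ?_⟩
        by_cases hiT : i ∈ T n
        · right; exact Finset.disjoint_left.mp (hAdisj n hn m hm hnm) hiT
        · left; exact hiT

theorem stmt15 (B : ℕ → ℕ → Set ℕ)
    -- each family Q_n = {B^n_i : i ∈ ℕ} consists of pairwise disjoint sets:
    (hdisj : ∀ n : ℕ, ∀ i j : ℕ, i ≠ j → Disjoint (B n i) (B n j))
    -- at most l of the sets in each family are nonempty: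
    (l : ℕ) (hl : ∀ n : ℕ, ∃ s : Finset ℕ, s.card ≤ l ∧ ∀ i : ℕ, B n i ≠ ∅ → i ∈ s) :
    ∃ A : Set ℕ, A.Infinite ∧ ∃ p : ℕ,
      ∀ n ∈ A, ∀ m ∈ A, n ≠ m → ∀ i : ℕ, p < i → B n i ∩ B m i = ∅ := by
  choose s hs1 hs2 using hl
  obtain ⟨A, _, hAinf, p, hp⟩ := stmt15_aux l s hs1 Set.univ Set.infinite_univ
  refine ⟨A, hAinf, p, fun n hn m hm hnm i hi => ?_⟩
  rcases hp n hn m hm hnm i hi with h | h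
  · have : B n i = ∅ := by by_contra hc; exact h (hs2 n i hc)
    rw [this, Set.empty_inter]
  · have : B m i = ∅ := by by_contra hc; exact h (hs2 m i hc)
    rw [this, Set.inter_empty]
end

section
/- Let (x_n) be a sequence in a Banach space X, and define B(x) = {A ⊆ ℕ : ∃k>0 ∀F ⊆ A finite, ‖Σ_{n∈F} x_n‖ ≤ k}. If B(x) is tall (every infinite subset of ℕ contains an infinite member of B(x)), then (x_n) is weakly null: x*(x_n) → 0 for every continuous linear functional x* on X. -/
/-!
If `x*(x_n)` does not tend to `0`, then (replacing `x*` by `-x*`) there are `ε > 0` and an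
infinite set `A` on which `x*(x_n) ≥ ε`. Tallness gives an infinite `B ⊆ A` whose finite partial
sums are bounded by some `k`; but for `F ⊆ B` with `#F = N` we get
`N ε ≤ x*(∑_{n∈F} x_n) ≤ ‖x*‖ k`, which fails for `N` large.
-/

open Filter Topology

section

variable {X : Type*} [NormedAddCommGroup X] [NormedSpace ℝ X]

lemma card_mul_le_opNorm_mul_of_norm_sum_le (x : ℕ → X) (f : X →L[ℝ] ℝ) {ε k : ℝ}
    {F : Finset ℕ} (hF : ∀ n ∈ F, ε ≤ f (x n)) (hk : ‖∑ n ∈ F, x n‖ ≤ k) :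
    F.card * ε ≤ ‖f‖ * k :=
  calc F.card * ε = ∑ _n ∈ F, ε := by rw [Finset.sum_const, nsmul_eq_mul]
    _ ≤ ∑ n ∈ F, f (x n) := Finset.sum_le_sum hF
    _ = f (∑ n ∈ F, x n) := (map_sum f _ _).symm
    _ ≤ ‖f (∑ n ∈ F, x n)‖ := le_abs_self _
    _ ≤ ‖f‖ * ‖∑ n ∈ F, x n‖ := f.le_opNorm _
    _ ≤ ‖f‖ * k := by gcongr

lemma Set.Finite.of_forall_le_apply_of_norm_sum_le (x : ℕ → X) (f : X →L[ℝ] ℝ) {ε k : ℝ}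
    (hε : 0 < ε) {B : Set ℕ} (hB : ∀ n ∈ B, ε ≤ f (x n))
    (hk : ∀ F : Finset ℕ, ↑F ⊆ B → ‖∑ n ∈ F, x n‖ ≤ k) : B.Finite := by
  by_contra hinf
  obtain ⟨N, hN⟩ := exists_nat_gt (‖f‖ * k / ε)
  obtain ⟨F, hFB, rfl⟩ := Set.Infinite.exists_subset_card_eq hinf N
  have := card_mul_le_opNorm_mul_of_norm_sum_le x f (fun n hn => hB n (hFB hn)) (hk F hFB)
  rw [div_lt_iff₀ hε] at hN
  linarith

lemma finite_setOf_le_apply_of_tall (x : ℕ → X)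
    (htall : ∀ A : Set ℕ, A.Infinite → ∃ B ⊆ A, B.Infinite ∧
      ∃ k : ℝ, 0 < k ∧ ∀ F : Finset ℕ, ↑F ⊆ B → ‖∑ n ∈ F, x n‖ ≤ k)
    (f : X →L[ℝ] ℝ) {ε : ℝ} (hε : 0 < ε) : {n | ε ≤ f (x n)}.Finite := by
  by_contra hA
  obtain ⟨B, hBA, hB, k, -, hk⟩ := htall _ hA
  exact hB (.of_forall_le_apply_of_norm_sum_le x f hε hBA hk)

end

lemma exists_pos_infinite_setOf_le_or_le_neg {u : ℕ → ℝ} (hu : ¬Tendsto u atTop (𝓝 0)) :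
    ∃ ε > 0, {n | ε ≤ u n}.Infinite ∨ {n | ε ≤ -u n}.Infinite := by
  rw [NormedAddGroup.tendsto_nhds_zero] at hu
  push Not at hu
  obtain ⟨ε, hε, hfreq⟩ := hu
  have hinf : {n | ε ≤ |u n|}.Infinite := by
    rw [← Nat.frequently_atTop_iff_infinite]
    simpa only [not_eventually, not_lt, Real.norm_eq_abs] using hfreq
  exact ⟨ε, hε, Set.infinite_union.mp (hinf.mono fun n (hn : ε ≤ |u n|) => le_abs.mp hn)⟩

theorem stmt17_general {X : Type*} [NormedAddCommGroup X] [NormedSpace ℝ X]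
    (x : ℕ → X)
    -- B(x) is tall:
    (htall : ∀ A : Set ℕ, A.Infinite → ∃ B ⊆ A, B.Infinite ∧
      ∃ k : ℝ, 0 < k ∧ ∀ F : Finset ℕ, ↑F ⊆ B → ‖∑ n ∈ F, x n‖ ≤ k) :
    -- (x_n) is weakly null:
    ∀ f : X →L[ℝ] ℝ, Tendsto (fun n : ℕ => f (x n)) atTop (nhds 0) := by
  intro f
  by_contra hf
  obtain ⟨ε, hε, hpos | hneg⟩ := exists_pos_infinite_setOf_le_or_le_neg hf
  · exact hpos (finite_setOf_le_apply_of_tall x htall f hε)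
  · exact hneg (by simpa using finite_setOf_le_apply_of_tall x htall (-f) hε)

theorem stmt17 {X : Type*} [NormedAddCommGroup X] [NormedSpace ℝ X] [CompleteSpace X]
    (x : ℕ → X)
    -- B(x) is tall:
    (htall : ∀ A : Set ℕ, A.Infinite → ∃ B ⊆ A, B.Infinite ∧
      ∃ k : ℝ, 0 < k ∧ ∀ F : Finset ℕ, ↑F ⊆ B → ‖∑ n ∈ F, x n‖ ≤ k) :
    -- (x_n) is weakly null:
    ∀ f : X →L[ℝ] ℝ, Tendsto (fun n : ℕ => f (x n)) atTop (nhds 0) :=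
  stmt17_general x htall
end
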